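/- arXiv:1708.06143 — 5 statements merged into one kernel-verified Lean document; each statement's English description precedes it below -/
import Mathlib

section
/- Let R be a commutative Noetherian ring and I an ideal of R. Then there is a ring isomorphism R⟦X⟧ / (I·R⟦X⟧) ≅ (R/I)⟦X⟧, where I·R⟦X⟧ denotes the ideal of the power series ring R⟦X⟧ generated by the image of I under the constant-coefficient inclusion, and the isomorphism is induced by reducing each coefficient modulo I. -/
/-- For a commutative Noetherian ring `R` and an ideal `I` of `R`, there is a ring
isomorphism `R⟦X⟧ / (I·R⟦X⟧) ≅ (R/I)⟦X⟧`, where `I·R⟦X⟧` is the ideal generated by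
the image of `I` under the constant-coefficient inclusion, and the isomorphism is
induced by reducing each coefficient modulo `I`. -/
theorem powerSeries_quotient_iso_of_ideal {R : Type*} [CommRing R] [IsNoetherianRing R]
    (I : Ideal R) :
    ∃ e : (PowerSeries R ⧸ (I.map (PowerSeries.C : R →+* PowerSeries R))) ≃+* PowerSeries (R ⧸ I),
      ∀ f : PowerSeries R,
        e (Ideal.Quotient.mk (I.map (PowerSeries.C : R →+* PowerSeries R)) f)
          = PowerSeries.map (Ideal.Quotient.mk I) f := by
  set φ : PowerSeries R →+* PowerSeries (R ⧸ I) := PowerSeries.map (Ideal.Quotient.mk I)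
  have hsurj : Function.Surjective φ := by
    intro g
    refine ⟨PowerSeries.mk fun n => (Ideal.Quotient.mk_surjective (PowerSeries.coeff n g)).choose, ?_⟩
    ext n
    simp [φ, (Ideal.Quotient.mk_surjective (PowerSeries.coeff n g)).choose_spec]
  have hker : RingHom.ker φ = I.map (PowerSeries.C : R →+* PowerSeries R) := by
    apply le_antisymm
    · intro f hf
      have hcoeff : ∀ n, PowerSeries.coeff n f ∈ I := by
        intro n
        have : PowerSeries.coeff n (φ f) = 0 := by
          rw [RingHom.mem_ker.mp hf]; simp
        simpa [φ, Ideal.Quotient.eq_zero_iff_mem] using this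
      obtain ⟨s, hs⟩ := (isNoetherianRing_iff_ideal_fg R).mp ‹_› I
      have hrep : ∀ n, ∃ c : R → R, ∑ i ∈ s, c i • i = PowerSeries.coeff n f := by
        intro n
        obtain ⟨c, -, hc⟩ := Submodule.mem_span_finset.mp (by rw [show Submodule.span R (s:Set R) = I from hs]; exact hcoeff n)
        exact ⟨c, hc⟩
      choose c hc using hrep
      have : f = ∑ i ∈ s, PowerSeries.C i * PowerSeries.mk (fun n => c n i) := by
        ext n
        simp only [map_sum, PowerSeries.coeff_C_mul, PowerSeries.coeff_mk]
        rw [← hc n]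
        simp [smul_eq_mul, mul_comm]
      rw [this]
      refine Ideal.sum_mem _ fun i hi => Ideal.mul_mem_right _ _ ?_
      exact Ideal.mem_map_of_mem _ (by rw [← hs]; exact Ideal.subset_span hi)
    · rw [Ideal.map_le_iff_le_comap]
      intro x hx
      simp [φ, RingHom.mem_ker, PowerSeries.map_C, Ideal.Quotient.eq_zero_iff_mem.mpr hx]
  refine ⟨(Ideal.quotEquivOfEq hker.symm).trans (RingHom.quotientKerEquivOfSurjective hsurj),
    fun f => ?_⟩
  simp [Ideal.quotEquivOfEq_mk, RingHom.quotientKerEquivOfSurjective,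
    RingHom.kerLift_mk]
end

section
/- Let R be a commutative Noetherian ring and Q a prime ideal of R. Then the extension Q·R⟦X⟧ of Q to the power series ring R⟦X⟧ is a prime ideal of R⟦X⟧, and its contraction along the constant-coefficient inclusion equals Q, i.e. the preimage of Q·R⟦X⟧ under PowerSeries.C : R →+* R⟦X⟧ is Q. -/
/-- For a commutative Noetherian ring `R` and a prime ideal `Q` of `R`, the extension
`Q·R⟦X⟧` of `Q` to the power series ring is prime, and its contraction along the
constant-coefficient inclusion `PowerSeries.C : R →+* R⟦X⟧` equals `Q`. -/
theorem powerSeries_extension_of_prime_isPrime {R : Type*} [CommRing R] [IsNoetherianRing R]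
    (Q : Ideal R) (hQ : Q.IsPrime) :
    (Q.map ((PowerSeries.C : R →+* PowerSeries R))).IsPrime ∧
      (Q.map ((PowerSeries.C : R →+* PowerSeries R))).comap ((PowerSeries.C : R →+* PowerSeries R)) = Q := by
  classical
  set φ : PowerSeries R →+* PowerSeries (R ⧸ Q) := PowerSeries.map (Ideal.Quotient.mk Q) with hφ
  have hker : ∀ f : PowerSeries R, f ∈ RingHom.ker φ ↔ ∀ n, PowerSeries.coeff n f ∈ Q := by
    intro f
    constructor
    · intro h n
      have := congrArg (PowerSeries.coeff (R := R ⧸ Q) n) h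
      simpa [hφ, Ideal.Quotient.eq_zero_iff_mem] using this
    · intro h
      ext n
      simpa [hφ, Ideal.Quotient.eq_zero_iff_mem] using h n
  have hmain : Q.map (PowerSeries.C : R →+* PowerSeries R) = RingHom.ker φ := by
    apply le_antisymm
    · rw [Ideal.map_le_iff_le_comap]
      intro q hq
      simp only [Ideal.mem_comap, RingHom.mem_ker, hφ, PowerSeries.map_C]
      rw [Ideal.Quotient.eq_zero_iff_mem.mpr hq, map_zero]
    · intro f hf
      rw [hker] at hf
      obtain ⟨s, hs⟩ := (IsNoetherian.noetherian Q : Q.FG)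
      have hcoef : ∀ n, ∃ c : R → R, ∑ i ∈ s, c i • i = PowerSeries.coeff n f := by
        intro n
        obtain ⟨c, -, hc⟩ := Submodule.mem_span_finset.mp (hs ▸ hf n)
        exact ⟨c, hc⟩
      choose c hc using hcoef
      have hfs : f = ∑ q ∈ s, PowerSeries.C q * PowerSeries.mk (fun n => c n q) := by
        ext n
        rw [map_sum]
        simp only [PowerSeries.coeff_C_mul, PowerSeries.coeff_mk]
        rw [← hc n]
        exact Finset.sum_congr rfl fun i _ => by rw [smul_eq_mul, mul_comm]
      rw [hfs]
      refine Ideal.sum_mem _ fun q hq => Ideal.mul_mem_right _ _ ?_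
      exact Ideal.mem_map_of_mem _ (hs ▸ Submodule.subset_span hq)
  constructor
  · rw [hmain]
    have : IsDomain (R ⧸ Q) := Ideal.Quotient.isDomain Q
    exact RingHom.ker_isPrime φ
  · ext r
    simp only [Ideal.mem_comap, hmain, RingHom.mem_ker, hφ, PowerSeries.map_C]
    constructor
    · intro h
      have := congrArg (PowerSeries.coeff (R := R ⧸ Q) 0) h
      simpa [Ideal.Quotient.eq_zero_iff_mem] using this
    · intro h
      rw [Ideal.Quotient.eq_zero_iff_mem.mpr h, map_zero]
end

section
/- For every commutative ring R, the Krull dimension of the power series ring R⟦X⟧ is at least one more than the Krull dimension of R: ringKrullDim R⟦X⟧ ≥ ringKrullDim R + 1. -/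
open PowerSeries in
private lemma exists_longer_series (R : Type*) [CommRing R]
    (p : LTSeries (PrimeSpectrum R)) :
    ∃ q : LTSeries (PrimeSpectrum (PowerSeries R)), q.length = p.length + 1 := by
  -- pullback along the constant coefficient map
  have hsm : StrictMono (PrimeSpectrum.comap (constantCoeff (R := R))) := by
    refine Monotone.strictMono_of_injective (fun a b hab => Ideal.comap_mono hab) ?_
    exact PrimeSpectrum.comap_injective_of_surjective _ constantCoeff_surj
  set P : Ideal R := p.head.asIdeal with hP
  have : P.IsPrime := p.head.isPrime
  -- the extra prime at the bottom: kernel of R⟦X⟧ → (R/P)⟦X⟧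
  let q0 : PrimeSpectrum (PowerSeries R) :=
    ⟨RingHom.ker (PowerSeries.map (Ideal.Quotient.mk P)), RingHom.ker_isPrime _⟩
  have hlt : q0 < PrimeSpectrum.comap (constantCoeff (R := R)) p.head := by
    have hle : q0 ≤ PrimeSpectrum.comap (constantCoeff (R := R)) p.head := by
      intro f hf
      have h0 : PowerSeries.map (Ideal.Quotient.mk P) f = 0 := hf
      have h1 := congrArg (constantCoeff (R := R ⧸ P)) h0
      rw [← PowerSeries.coeff_zero_eq_constantCoeff_apply, PowerSeries.coeff_map,
        PowerSeries.coeff_zero_eq_constantCoeff_apply] at h1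
      simp only [map_zero] at h1
      show constantCoeff (R := R) f ∈ P
      exact Ideal.Quotient.eq_zero_iff_mem.mp h1
    refine lt_of_le_of_ne hle (fun h => ?_)
    have hXmem : (PowerSeries.X : PowerSeries R) ∈
        (PrimeSpectrum.comap (constantCoeff (R := R)) p.head).asIdeal := by
      show constantCoeff (R := R) PowerSeries.X ∈ P
      simp
    rw [← h] at hXmem
    have : (PowerSeries.X : PowerSeries (R ⧸ P)) = 0 := by
      have := hXmem
      simpa [q0] using this
    exact PowerSeries.X_ne_zero this
  exact ⟨(p.map _ hsm).cons q0 (by simpa using hlt), by simp⟩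

/-- For every commutative ring `R`, the Krull dimension of the power series ring `R⟦X⟧`
is at least one more than the Krull dimension of `R`. -/
theorem ringKrullDim_powerSeries_ge (R : Type*) [CommRing R] :
    ringKrullDim R + 1 ≤ ringKrullDim (PowerSeries R) := by
  cases isEmpty_or_nonempty (PrimeSpectrum R) with
  | inl h =>
    rw [ringKrullDim, Order.krullDim_eq_bot]
    simp
  | inr h =>
    have : Nonempty (PrimeSpectrum (PowerSeries R)) := by
      obtain ⟨P⟩ := h
      exact ⟨PrimeSpectrum.comap (PowerSeries.constantCoeff (R := R)) P⟩
    rw [ringKrullDim, ringKrullDim, Order.krullDim_eq_iSup_length,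
      Order.krullDim_eq_iSup_length,
      ← WithBot.coe_one, ← WithBot.coe_add,
      WithBot.coe_le_coe, ENat.iSup_add]
    refine iSup_le fun p => ?_
    obtain ⟨q, hq⟩ := exists_longer_series R p
    calc ((p.length : ℕ∞) + 1) = (q.length : ℕ∞) := by rw [hq]; push_cast; ring
    _ ≤ ⨆ (q : LTSeries (PrimeSpectrum (PowerSeries R))), (q.length : ℕ∞) := le_iSup (fun q : LTSeries (PrimeSpectrum (PowerSeries R)) => (q.length : ℕ∞)) q
end

section
/- Let G be a profinite group (a compact, Hausdorff, totally disconnected topological group) which is topologically finitely generated, i.e. there is a finite subset S of G such that the subgroup generated by S is dense in G. Let H be an open subgroup of G. Then there exists an open subgroup M of G with M ≤ H such that φ(M) = M for every continuous group automorphism φ of G; in particular M is a normal subgroup of G. -/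
open Subgroup

private lemma continuous_of_isOpen_ker {G P : Type*} [Group G] [TopologicalSpace G]
    [IsTopologicalGroup G] [Group P] [TopologicalSpace P] [DiscreteTopology P]
    (f : G →* P) (h : IsOpen ((f.ker : Subgroup G) : Set G)) : Continuous f := by
  rw [continuous_def]
  intro U _
  have : f ⁻¹' U = ⋃ g ∈ f ⁻¹' U, (fun x => g⁻¹ * x) ⁻¹' (f.ker : Set G) := by
    ext x
    simp only [Set.mem_preimage, Set.mem_iUnion, SetLike.mem_coe, MonoidHom.mem_ker, map_mul,
      map_inv]
    constructor
    · intro hx; exact ⟨x, hx, by simp⟩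
    · rintro ⟨g, hg, hgx⟩
      have : f x = f g := by
        have := mul_eq_one_iff_inv_eq.mp hgx
        simpa [eq_comm] using this
      rwa [this]
  rw [this]
  exact isOpen_biUnion fun g _ => h.preimage (by continuity)

private lemma aux_finite {G : Type*} [Group G] [TopologicalSpace G] [IsTopologicalGroup G]
    [CompactSpace G] {S : Set G} (hS : S.Finite)
    (hd : Dense ((Subgroup.closure S : Subgroup G) : Set G)) (m : ℕ) :
    {N : Subgroup G | IsOpen (N : Set G) ∧ N.Normal ∧ N.index ≤ m}.Finite := by
  letI : TopologicalSpace (Equiv.Perm (Fin m)) := ⊥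
  haveI : DiscreteTopology (Equiv.Perm (Fin m)) := ⟨rfl⟩
  have key : ∀ N : Subgroup G, IsOpen (N : Set G) → N.Normal → N.index ≤ m →
      ∃ f : G →* Equiv.Perm (Fin m), Continuous f ∧ f.ker = N := by
    intro N hopen hnorm hind
    haveI := hnorm
    haveI : Finite (G ⧸ N) := N.quotient_finite_of_isOpen hopen
    haveI : Fintype (G ⧸ N) := Fintype.ofFinite _
    have hcard : Fintype.card (G ⧸ N) ≤ m := by
      rwa [← Nat.card_eq_fintype_card, ← Subgroup.index_eq_card]
    let e : (G ⧸ N) ↪ Fin m :=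
      (Fintype.equivFin (G ⧸ N)).toEmbedding.trans (Fin.castLEEmb hcard)
    let big : (G ⧸ N) →* Equiv.Perm (Fin m) :=
      (Equiv.Perm.viaEmbeddingHom e).comp (MulAction.toPermHom (G ⧸ N) (G ⧸ N))
    have hbig : Function.Injective big :=
      (Equiv.Perm.viaEmbeddingHom_injective e).comp MulAction.toPerm_injective
    refine ⟨big.comp (QuotientGroup.mk' N), ?_, ?_⟩
    · apply continuous_of_isOpen_ker
      convert hopen using 2
      ext x
      simp only [MonoidHom.mem_ker, MonoidHom.comp_apply, QuotientGroup.mk'_apply]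
      rw [← map_one big, hbig.eq_iff, QuotientGroup.eq_one_iff]
    · ext x
      simp only [MonoidHom.mem_ker, MonoidHom.comp_apply, QuotientGroup.mk'_apply]
      rw [← map_one big, hbig.eq_iff, QuotientGroup.eq_one_iff]
  choose f hfc hfk using key
  rw [Set.finite_coe_iff.symm]
  haveI := hS.to_subtype
  refine Finite.of_injective
    (fun N : {N : Subgroup G | IsOpen (N : Set G) ∧ N.Normal ∧ N.index ≤ m} =>
      fun s : S => f N.1 N.2.1 N.2.2.1 N.2.2.2 (s : G)) ?_
  rintro ⟨N₁, h₁⟩ ⟨N₂, h₂⟩ h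
  have heq : ⇑(f N₁ h₁.1 h₁.2.1 h₁.2.2) = ⇑(f N₂ h₂.1 h₂.2.1 h₂.2.2) := by
    refine Continuous.ext_on hd (hfc _ _ _ _) (hfc _ _ _ _) ?_
    exact MonoidHom.eqOn_closure fun x hx => congrFun h ⟨x, hx⟩
  have : N₁ = N₂ := by
    rw [← hfk N₁ h₁.1 h₁.2.1 h₁.2.2, ← hfk N₂ h₂.1 h₂.2.1 h₂.2.2]
    ext x
    simp only [MonoidHom.mem_ker]
    rw [show (f N₁ h₁.1 h₁.2.1 h₁.2.2) x = (f N₂ h₂.1 h₂.2.1 h₂.2.2) x from congrFun heq x]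
  simpa using this

/-- Let `G` be a profinite group (compact, Hausdorff, totally disconnected topological group)
which is topologically finitely generated: there is a finite subset `S` of `G` such that the
subgroup generated by `S` is dense in `G`. Then every open subgroup `H` of `G` contains an
open subgroup `M` of `G` which is invariant under every continuous group automorphism of `G`;
in particular `M` is normal in `G`. -/
theorem exists_open_continuousAut_invariant_subgroup {G : Type*} [Group G]
    [TopologicalSpace G] [IsTopologicalGroup G]
    [CompactSpace G] [T2Space G] [TotallyDisconnectedSpace G]
    (hfg : ∃ S : Set G, S.Finite ∧ Dense ((Subgroup.closure S : Subgroup G) : Set G))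
    (H : Subgroup G) (hH : IsOpen (H : Set G)) :
    ∃ M : Subgroup G, IsOpen (M : Set G) ∧ M ≤ H ∧
      (∀ φ : G ≃* G, Continuous φ → M.map φ.toMonoidHom = M) ∧ M.Normal := by
  obtain ⟨S, hSfin, hSdense⟩ := hfg
  haveI : Finite (G ⧸ H) := H.quotient_finite_of_isOpen hH
  haveI : H.FiniteIndex := H.finiteIndex_of_finite_quotient
  have hN₀open : IsOpen ((H.normalCore : Subgroup G) : Set G) :=
    Subgroup.isOpen_of_isClosed_of_finiteIndex _
      (H.normalCore_isClosed (H.isClosed_of_isOpen hH))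
  set m := H.normalCore.index with hm
  set 𝒩 : Set (Subgroup G) := {N | IsOpen (N : Set G) ∧ N.Normal ∧ N.index ≤ m} with h𝒩
  have hfin : 𝒩.Finite := aux_finite hSfin hSdense m
  have hN₀mem : H.normalCore ∈ 𝒩 := ⟨hN₀open, H.normalCore_normal, le_rfl⟩
  set M : Subgroup G := sInf 𝒩 with hM
  -- invariance under continuous automorphisms
  have hmapmem : ∀ (ψ : G ≃* G), Continuous ψ → ∀ N ∈ 𝒩, N.map ψ.toMonoidHom ∈ 𝒩 := by
    intro ψ hψ N hN
    have hψsymm : Continuous ψ.symm := by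
      have := (Continuous.homeoOfEquivCompactToT2 (f := ψ.toEquiv) hψ).symm.continuous
      exact this
    refine ⟨?_, hN.2.1.map ψ.toMonoidHom ψ.surjective, ?_⟩
    · have : ((N.map ψ.toMonoidHom : Subgroup G) : Set G) = ⇑ψ.symm ⁻¹' (N : Set G) := by
        rw [Subgroup.coe_map]
        exact ψ.toEquiv.image_eq_preimage_symm _
      rw [this]
      exact hN.1.preimage hψsymm
    · rw [Subgroup.map_equiv_eq_comap_symm']
      rw [Subgroup.index_comap_of_surjective _ ψ.symm.surjective]
      exact hN.2.2
  have hcancel : ∀ (ψ : G ≃* G) (K : Subgroup G),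
      (K.map ψ.symm.toMonoidHom).map ψ.toMonoidHom = K := by
    intro ψ K
    rw [Subgroup.map_map]
    convert Subgroup.map_id K
    ext x
    simp
  have hle : ∀ ψ : G ≃* G, Continuous ψ → M.map ψ.toMonoidHom ≤ M := by
    intro ψ hψ
    refine le_sInf fun N hN => ?_
    rw [Subgroup.map_le_iff_le_comap]
    have hψsymm : Continuous ψ.symm :=
      (Continuous.homeoOfEquivCompactToT2 (f := ψ.toEquiv) hψ).symm.continuous
    have h1 : N.map ψ.symm.toMonoidHom ∈ 𝒩 := hmapmem ψ.symm hψsymm N hN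
    have h2 : M ≤ N.map ψ.symm.toMonoidHom := sInf_le h1
    rwa [← Subgroup.comap_equiv_eq_map_symm'] at h2
  have hinv : ∀ φ : G ≃* G, Continuous φ → M.map φ.toMonoidHom = M := by
    intro φ hφ
    have hφsymm : Continuous φ.symm :=
      (Continuous.homeoOfEquivCompactToT2 (f := φ.toEquiv) hφ).symm.continuous
    refine le_antisymm (hle φ hφ) ?_
    have h2 : M.map φ.symm.toMonoidHom ≤ M := hle φ.symm hφsymm
    have h3 := Subgroup.map_mono (f := φ.toMonoidHom) h2
    rwa [hcancel φ M] at h3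
  have hMopen : IsOpen (M : Set G) := by
    have : (M : Set G) = ⋂ N ∈ 𝒩, (N : Set G) := by
      rw [hM]; exact Subgroup.coe_sInf 𝒩
    rw [this]
    exact hfin.isOpen_biInter fun N hN => hN.1
  have hMnormal : M.Normal := by
    constructor
    intro n hn g
    have hconj : Continuous ⇑(MulAut.conj g) := by
      have : ⇑(MulAut.conj g) = fun x => g * x * g⁻¹ := funext fun x => rfl
      rw [this]
      exact IsTopologicalGroup.continuous_conj g
    have := hinv (MulAut.conj g) hconj
    rw [← this]
    exact ⟨n, hn, rfl⟩
  exact ⟨M, hMopen, le_trans (sInf_le hN₀mem) H.normalCore_le, hinv, hMnormal⟩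
end

section
/- Let φ : G →* H be a surjective group homomorphism whose kernel is finite, and let x ∈ G. Then the centralizer of x has finite index in G if and only if the centralizer of φ(x) has finite index in H. Consequently, the preimage under φ of the set Δ(H) = {y ∈ H : [H : C_H(y)] < ∞} equals Δ(G) = {x ∈ G : [G : C_G(x)] < ∞}. -/
/-- Let `φ : G →* H` be a surjective group homomorphism with finite kernel. Then for every
`x : G`, the centralizer of `x` has finite index in `G` if and only if the centralizer of
`φ x` has finite index in `H`. Consequently, the preimage under `φ` of the FC-centre
`Δ(H) = {y : [H : C_H(y)] < ∞}` equals the FC-centre `Δ(G) = {x : [G : C_G(x)] < ∞}`. -/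
theorem centralizer_finiteIndex_iff_map_of_finite_kernel {G H : Type*} [Group G] [Group H]
    (φ : G →* H) (hsurj : Function.Surjective φ) (hker : Finite φ.ker) :
    (∀ x : G, (Subgroup.centralizer {x}).FiniteIndex ↔
        (Subgroup.centralizer {φ x}).FiniteIndex) ∧
      φ ⁻¹' {y : H | (Subgroup.centralizer {y}).FiniteIndex}
        = {x : G | (Subgroup.centralizer {x}).FiniteIndex} := by
  have main : ∀ x : G, (Subgroup.centralizer {x}).FiniteIndex ↔
      (Subgroup.centralizer {φ x}).FiniteIndex := by
    intro x
    constructor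
    · intro h
      have hle : (Subgroup.centralizer {x}).map φ ≤ Subgroup.centralizer {φ x} := by
        rintro _ ⟨g, hg, rfl⟩
        simp only [SetLike.mem_coe] at hg
        rw [Subgroup.mem_centralizer_singleton_iff] at hg ⊢
        rw [← map_mul, ← map_mul, hg]
      have hd : (Subgroup.centralizer {φ x}).index ∣ (Subgroup.centralizer {x}).index :=
        (Subgroup.index_dvd_of_le hle).trans
          ((Subgroup.centralizer {x}).index_map_dvd hsurj)
      exact ⟨fun h0 => h.index_ne_zero (Nat.eq_zero_of_zero_dvd (h0 ▸ hd))⟩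
    · intro h
      set K : Subgroup G := (Subgroup.centralizer {φ x}).comap φ with hK
      have hKidx : K.index ≠ 0 := by
        rw [Subgroup.index_comap_of_surjective _ hsurj]
        exact h.index_ne_zero
      have hle : Subgroup.centralizer {x} ≤ K := by
        intro g hg
        rw [Subgroup.mem_centralizer_singleton_iff] at hg
        simp only [hK, Subgroup.mem_comap, Subgroup.mem_centralizer_singleton_iff,
          ← map_mul, hg]
      -- injection from K ⧸ subgroupOf into the kernel
      have hfin : Finite (K ⧸ (Subgroup.centralizer {x}).subgroupOf K) := by
        have hcomm : ∀ g : K, (g : G) * x * ((g : G))⁻¹ * x⁻¹ ∈ φ.ker := by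
          intro g
          have := g.2
          simp only [hK, Subgroup.mem_comap, Subgroup.mem_centralizer_singleton_iff] at this
          simp only [MonoidHom.mem_ker, map_mul, map_inv, this]
          group
        refine Finite.of_injective (fun q => Quotient.liftOn' q
          (fun g => (⟨(g : G) * x * ((g : G))⁻¹ * x⁻¹, hcomm g⟩ : φ.ker)) ?_) ?_
        · intro a b hab
          rw [QuotientGroup.leftRel_apply] at hab
          have : ((a : G))⁻¹ * b ∈ Subgroup.centralizer {x} := hab
          rw [Subgroup.mem_centralizer_singleton_iff] at this
          have hconj : (a : G) * x * (a : G)⁻¹ = (b : G) * x * (b : G)⁻¹ := by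
            have h2 : (b : G) * x = (a : G) * (x * ((a : G))⁻¹ * (b : G)) := by
              rw [show (a : G) * (x * ((a:G))⁻¹ * (b:G)) = (a:G) * (x * (((a:G))⁻¹ * (b:G))) by group,
                ← this]; group
            rw [h2]; group
          exact Subtype.ext (show (a : G) * x * ((a : G))⁻¹ * x⁻¹
            = (b : G) * x * ((b : G))⁻¹ * x⁻¹ by rw [hconj])
        · intro q1 q2 hq
          induction q1 using Quotient.inductionOn'
          induction q2 using Quotient.inductionOn'
          rename_i a b
          simp only [Quotient.liftOn'_mk'', Subtype.ext_iff] at hq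
          apply Quotient.sound'
          rw [QuotientGroup.leftRel_apply]
          show ((a : G))⁻¹ * b ∈ Subgroup.centralizer {x}
          rw [Subgroup.mem_centralizer_singleton_iff]
          have : (a : G) * x * ((a : G))⁻¹ = (b : G) * x * ((b : G))⁻¹ :=
            mul_right_cancel (b := x⁻¹) hq
          calc ((a:G))⁻¹ * (b:G) * x = ((a:G))⁻¹ * ((b:G) * x * (b:G)⁻¹) * (b:G) := by group
            _ = ((a:G))⁻¹ * ((a:G) * x * (a:G)⁻¹) * (b:G) := by rw [this]
            _ = x * (((a:G))⁻¹ * (b:G)) := by group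
      have hrel : (Subgroup.centralizer {x}).relIndex K ≠ 0 :=
        Subgroup.index_ne_zero_of_finite
      refine ⟨?_⟩
      rw [← Subgroup.relIndex_mul_index hle]
      exact Nat.mul_ne_zero hrel hKidx
  refine ⟨main, ?_⟩
  ext x
  exact (main x).symm
end
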